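/- Let M be a connected topological space, let A be a von Neumann algebra acting on a complex Hilbert space H, and let q : M → A be continuous into B(H) with the weak operator topology, with each q(x) a minimal projection of A. Then for every pair of points x, y ∈ M there exists B ∈ A with q(x)·B·q(y) ≠ 0. -/

import Mathlib

/-!
For fixed `x`, whether some `B ∈ A` has `q x * B * q z ≠ 0` is a locally constant property of
`z`, hence constant on the connected space `M`, and it holds at `z = x`. Weak continuity makes
`q z' * q z ≠ 0` for `z'` near `z`. For minimal projections `p, p'` with `p' * p ≠ 0`, the identity
`p * p' * p = star (p' * p) * (p' * p)` and the C*-property give `p * p' * p = c • p` with `c ≠ 0`,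
so `X * p ≠ 0` forces `X * p * p' * p = c • (X * p) ≠ 0`: a witness `B` for `p` yields the witness
`B * p` for `p'`.
-/

open scoped InnerProductSpace

structure IsMinimalProjection {E S : Type*} [Mul E] [Star E] [Zero E] [SMul ℂ E] [SetLike S E]
    (A : S) (p : E) : Prop where
  mem : p ∈ A
  ne_zero : p ≠ 0
  isStarProjection : IsStarProjection p
  mul_mul_self_eq_smul : ∀ a ∈ A, ∃ c : ℂ, p * a * p = c • p

theorem IsStarProjection.mul_mul_eq_star_mul_self {E : Type*} [Semigroup E] [StarMul E] {p p' : E}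
    (hp : IsStarProjection p) (hp' : IsStarProjection p') :
    p * p' * p = star (p' * p) * (p' * p) := by
  rw [star_mul, hp.isSelfAdjoint.star_eq, hp'.isSelfAdjoint.star_eq, ← mul_assoc,
    mul_assoc p p' p', hp'.isIdempotentElem.eq]

section CStarRing

variable {E S : Type*} [NonUnitalNormedRing E] [StarRing E] [CStarRing E] [Module ℂ E]
  [SMulCommClass ℂ E E] [SetLike S E] {A : S} {p p' : E}

theorem IsMinimalProjection.mul_mul_ne_zero (hp : IsMinimalProjection A p)
    (hp' : IsStarProjection p') (hp'A : p' ∈ A) (hp'p : p' * p ≠ 0) {X : E} (hX : X * p ≠ 0) :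
    X * p * p' ≠ 0 := by
  obtain ⟨c, hc⟩ := hp.mul_mul_self_eq_smul p' hp'A
  have hc0 : c ≠ 0 := by
    rintro rfl
    rw [zero_smul, hp.isStarProjection.mul_mul_eq_star_mul_self hp'] at hc
    exact (CStarRing.star_mul_self_ne_zero_iff _).mpr hp'p hc
  intro h
  have : X * (p * p' * p) = 0 := by rw [← mul_assoc, ← mul_assoc, h, zero_mul]
  rw [hc, mul_smul_comm] at this
  exact smul_ne_zero hc0 hX this

theorem IsMinimalProjection.exists_mul_mul_ne_zero_iff [MulMemClass S E] (hp : IsMinimalProjection A p)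
    (hp' : IsMinimalProjection A p') (hp'p : p' * p ≠ 0) (T : E) :
    (∃ B ∈ A, T * B * p ≠ 0) ↔ ∃ B ∈ A, T * B * p' ≠ 0 := by
  have hpp' : p * p' ≠ 0 := by
    rw [← star_ne_zero, star_mul, hp.isStarProjection.isSelfAdjoint.star_eq,
      hp'.isStarProjection.isSelfAdjoint.star_eq]
    exact hp'p
  constructor
  · rintro ⟨B, hB, hTB⟩
    refine ⟨B * p, mul_mem hB hp.mem, ?_⟩
    simpa only [mul_assoc] using
      hp.mul_mul_ne_zero hp'.isStarProjection hp'.mem hp'p hTB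
  · rintro ⟨B, hB, hTB⟩
    refine ⟨B * p', mul_mem hB hp'.mem, ?_⟩
    simpa only [mul_assoc] using
      hp'.mul_mul_ne_zero hp.isStarProjection hp.mem hpp' hTB

end CStarRing

theorem eventually_mul_ne_zero_of_continuous_inner {M H : Type*} [TopologicalSpace M]
    [NormedAddCommGroup H] [InnerProductSpace ℂ H] {q : M → H →L[ℂ] H}
    (hq : ∀ v w : H, Continuous fun x => ⟪v, q x w⟫_ℂ) {z : M} (hz : IsIdempotentElem (q z))
    (hz0 : q z ≠ 0) : ∀ᶠ z' in nhds z, q z' * q z ≠ 0 := by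
  obtain ⟨v, hv⟩ : ∃ v, q z v ≠ 0 := by
    by_contra! h
    exact hz0 (ContinuousLinearMap.ext h)
  have hfix : q z (q z v) = q z v := congr($(hz.eq) v)
  have hz_ne : ⟪q z v, q z (q z v)⟫_ℂ ≠ 0 := by rwa [hfix, inner_self_ne_zero]
  filter_upwards [(hq (q z v) (q z v)).continuousAt.eventually_ne hz_ne] with z' hz' h
  exact hz' (by simpa using congr(⟪q z v, $h v⟫_ℂ))

theorem exists_nonvanishing_transition
    {M : Type*} [TopologicalSpace M] [ConnectedSpace M]
    {H : Type*} [NormedAddCommGroup H] [InnerProductSpace ℂ H] [CompleteSpace H]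
    (A : VonNeumannAlgebra H) (q : M → (H →L[ℂ] H))
    (hq_mem : ∀ x, q x ∈ A)
    (hq_cont : ∀ v w : H, Continuous fun x => ⟪v, q x w⟫_ℂ)
    (hq_ne : ∀ x, q x ≠ 0)
    (hq_idem : ∀ x, q x * q x = q x)
    (hq_sa : ∀ x, ContinuousLinearMap.adjoint (q x) = q x)
    (hq_min : ∀ x, ∀ a ∈ A, ∃ c : ℂ, q x * a * q x = c • q x) :
    ∀ x y : M, ∃ B ∈ A, q x * B * q y ≠ 0 := by
  have hmin (z : M) : IsMinimalProjection A (q z) :=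
    ⟨hq_mem z, hq_ne z, ⟨hq_idem z, by rw [IsSelfAdjoint, ContinuousLinearMap.star_eq_adjoint,
      hq_sa]⟩, hq_min z⟩
  intro x y
  have hloc : IsLocallyConstant fun z => ∃ B ∈ A, q x * B * q z ≠ 0 := by
    refine (IsLocallyConstant.iff_eventually_eq _).mpr fun z => ?_
    filter_upwards [eventually_mul_ne_zero_of_continuous_inner hq_cont (hq_idem z) (hq_ne z)]
      with z' hz'z
    exact propext ((hmin z).exists_mul_mul_ne_zero_iff (hmin z') hz'z _).symm
  have hx : ∃ B ∈ A, q x * B * q x ≠ 0 := ⟨q x, hq_mem x, by rw [hq_idem, hq_idem]; exact hq_ne x⟩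
  exact hloc.apply_eq_of_preconnectedSpace x y ▸ hx
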